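/- Let p be a prime and z, z₀ ∈ ℤ_p with z ≠ z₀. Then for every n ≥ 1, the p-adic valuation of b_n(pz, p) - b_n(pz₀, p) equals v_p(z - z₀) + 1. -/

import Mathlib

/-- `bZp p z n = b_{n-1}(pz, p)` in `ℤ_p`: the rational functions `b_n(x,y)` with
`b_{-1} = 0`, `b_0 = 1`, `b_n = ((1-x)·b_{n-1} + x·b_{n-2})/(1-yⁿ)`, specialized at
`x = pz`, `y = p`; each `1 - pⁿ` is a unit in `ℤ_p`, so `Ring.inverse` is its honest
inverse. -/
noncomputable def bZp (p : ℕ) [Fact p.Prime] (z : ℤ_[p]) : ℕ → ℤ_[p]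
  | 0 => 0
  | 1 => 1
  | n + 2 => (((1 : ℤ_[p]) - p * z) * bZp p z (n + 1) + p * z * bZp p z n) *
      Ring.inverse (1 - (p : ℤ_[p]) ^ (n + 1))

section aux
variable {p : ℕ} [Fact p.Prime]

lemma norm_one_sub_mul_p (z : ℤ_[p]) : ‖(1 : ℤ_[p]) - p * z‖ = 1 := by
  have h1 : ‖(p : ℤ_[p]) * z‖ < 1 := by
    calc ‖(p : ℤ_[p]) * z‖ = ‖(p : ℤ_[p])‖ * ‖z‖ := norm_mul _ _
    _ ≤ ‖(p : ℤ_[p])‖ * 1 :=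
        mul_le_mul_of_nonneg_left (PadicInt.norm_le_one z) (norm_nonneg _)
    _ < 1 := by
        rw [mul_one, PadicInt.norm_p]
        rw [inv_lt_one_iff₀]
        right
        exact_mod_cast (Fact.out : p.Prime).one_lt
  have : ‖(1 : ℤ_[p]) + (-(p * z))‖ = max ‖(1:ℤ_[p])‖ ‖-(p*z : ℤ_[p])‖ := by
    apply PadicInt.norm_add_eq_max_of_ne
    rw [norm_neg, norm_one]
    exact fun h => absurd h.symm (ne_of_lt h1)
  rw [sub_eq_add_neg, this, norm_neg, norm_one]
  exact max_eq_left h1.le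

lemma norm_one_sub_p_pow (k : ℕ) : ‖(1 : ℤ_[p]) - (p : ℤ_[p]) ^ (k + 1)‖ = 1 := by
  have := norm_one_sub_mul_p ((p : ℤ_[p]) ^ k)
  rwa [show (p : ℤ_[p]) * (p:ℤ_[p]) ^ k = (p:ℤ_[p]) ^ (k+1) by ring] at this

lemma isUnit_one_sub_p_pow (k : ℕ) : IsUnit ((1 : ℤ_[p]) - (p : ℤ_[p]) ^ (k + 1)) :=
  PadicInt.isUnit_iff.2 (norm_one_sub_p_pow k)

lemma norm_inv_one_sub_p_pow (k : ℕ) :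
    ‖Ring.inverse ((1 : ℤ_[p]) - (p : ℤ_[p]) ^ (k + 1))‖ = 1 := by
  have h := Ring.inverse_mul_cancel _ (isUnit_one_sub_p_pow (p := p) k)
  have := congrArg (fun x : ℤ_[p] => ‖x‖) h
  simp only [norm_mul, norm_one, norm_one_sub_p_pow, mul_one] at this
  exact this

lemma inv_one_sub_p_pow_sub_one (k : ℕ) :
    (p : ℤ_[p]) ∣ Ring.inverse ((1 : ℤ_[p]) - (p : ℤ_[p]) ^ (k + 1)) - 1 := by
  have h := Ring.inverse_mul_cancel _ (isUnit_one_sub_p_pow (p := p) k)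
  refine ⟨(p:ℤ_[p])^k * Ring.inverse ((1 : ℤ_[p]) - (p : ℤ_[p]) ^ (k + 1)), ?_⟩
  have : Ring.inverse ((1 : ℤ_[p]) - (p : ℤ_[p]) ^ (k + 1)) -
      Ring.inverse ((1 : ℤ_[p]) - (p : ℤ_[p]) ^ (k + 1)) * ((1 : ℤ_[p]) - (p : ℤ_[p]) ^ (k + 1))
      = (p:ℤ_[p]) * ((p:ℤ_[p])^k * Ring.inverse ((1 : ℤ_[p]) - (p : ℤ_[p]) ^ (k + 1))) := by
    ring
  rw [h] at this
  exact this

/-- `bZp p z (n+1) ≡ 1 mod p`. -/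
lemma bZp_sub_one_dvd (z : ℤ_[p]) : ∀ n, (p : ℤ_[p]) ∣ bZp p z (n + 1) - 1 := by
  intro n
  induction n with
  | zero => simp [bZp]
  | succ m ih =>
    obtain ⟨c, hc⟩ := ih
    obtain ⟨g, hg⟩ := inv_one_sub_p_pow_sub_one (p := p) m
    have hc' : bZp p z (m + 1) = 1 + p * c := by rw [← hc]; ring
    have hg' : Ring.inverse ((1 : ℤ_[p]) - (p : ℤ_[p]) ^ (m + 1)) = 1 + p * g := by
      rw [← hg]; ring
    refine ⟨(c - z - p*z*c + z * bZp p z m) * (1 + p * g)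
      + g * (1 + p * (c - z - p*z*c + z * bZp p z m))
      - p * g * (c - z - p*z*c + z * bZp p z m), ?_⟩
    show bZp p z (m + 2) - 1 = _
    rw [bZp, hc', hg']
    ring

/-- The key recurrence for differences. -/
lemma bZp_diff_rec (z z₀ : ℤ_[p]) (n : ℕ) :
    bZp p z (n + 2) - bZp p z₀ (n + 2) =
      (((1 : ℤ_[p]) - p * z) * (bZp p z (n + 1) - bZp p z₀ (n + 1))
        + p * z * (bZp p z n - bZp p z₀ n)
        + p * (z₀ - z) * (bZp p z₀ (n + 1) - bZp p z₀ n)) *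
      Ring.inverse (1 - (p : ℤ_[p]) ^ (n + 1)) := by
  show (((1 : ℤ_[p]) - p * z) * bZp p z (n + 1) + p * z * bZp p z n) *
      Ring.inverse (1 - (p : ℤ_[p]) ^ (n + 1)) -
      (((1 : ℤ_[p]) - p * z₀) * bZp p z₀ (n + 1) + p * z₀ * bZp p z₀ n) *
      Ring.inverse (1 - (p : ℤ_[p]) ^ (n + 1)) = _
  ring

lemma bZp_diff_norm (z z₀ : ℤ_[p]) (hz : z ≠ z₀) : ∀ n : ℕ,
    ‖bZp p z (n + 2) - bZp p z₀ (n + 2)‖ = ‖(p : ℤ_[p]) * (z - z₀)‖ ∧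
    ‖bZp p z (n + 1) - bZp p z₀ (n + 1)‖ ≤ ‖(p : ℤ_[p]) * (z - z₀)‖ := by
  have hp1 : ‖(p:ℤ_[p])‖ < 1 := by
    rw [PadicInt.norm_p, inv_lt_one_iff₀]
    right
    exact_mod_cast (Fact.out : p.Prime).one_lt
  intro n
  induction n with
  | zero =>
    constructor
    · have : bZp p z 2 - bZp p z₀ 2 =
          (p * (z₀ - z)) * Ring.inverse ((1:ℤ_[p]) - (p:ℤ_[p]) ^ (0+1)) := by
        show (((1 : ℤ_[p]) - p * z) * bZp p z 1 + p * z * bZp p z 0) *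
          Ring.inverse (1 - (p : ℤ_[p]) ^ (0 + 1)) -
          (((1 : ℤ_[p]) - p * z₀) * bZp p z₀ 1 + p * z₀ * bZp p z₀ 0) *
          Ring.inverse (1 - (p : ℤ_[p]) ^ (0 + 1)) = _
        simp only [bZp]
        ring
      rw [this, norm_mul, norm_inv_one_sub_p_pow, mul_one,
        show (p:ℤ_[p]) * (z₀ - z) = -((p:ℤ_[p]) * (z - z₀)) by ring, norm_neg]
    · have : bZp p z 1 - bZp p z₀ 1 = 0 := by simp [bZp]
      rw [this, norm_zero]
      positivity
  | succ m ih =>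
    obtain ⟨ih1, ih2⟩ := ih
    have hpne : (p : ℤ_[p]) ≠ 0 := by
      exact_mod_cast (Nat.cast_ne_zero (R := ℤ_[p])).2 (Fact.out : p.Prime).ne_zero
    have hN0 : 0 < ‖(p : ℤ_[p]) * (z - z₀)‖ :=
      norm_pos_iff.2 (mul_ne_zero hpne (sub_ne_zero.2 hz))
    have hrec := bZp_diff_rec (p := p) z z₀ (m + 1)
    set N := ‖(p : ℤ_[p]) * (z - z₀)‖ with hNdef
    set a := ((1 : ℤ_[p]) - p * z) * (bZp p z (m + 1 + 1) - bZp p z₀ (m + 1 + 1)) with hadef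
    set b := (p:ℤ_[p]) * z * (bZp p z (m + 1) - bZp p z₀ (m + 1)) with hbdef
    set c := (p:ℤ_[p]) * (z₀ - z) * (bZp p z₀ (m + 1 + 1) - bZp p z₀ (m + 1)) with hcdef
    have ha : ‖a‖ = N := by
      rw [hadef, norm_mul, norm_one_sub_mul_p, one_mul]
      exact ih1
    have hb : ‖b‖ < N := by
      rw [hbdef, mul_assoc, norm_mul]
      calc ‖(p:ℤ_[p])‖ * ‖z * (bZp p z (m + 1) - bZp p z₀ (m + 1))‖
          ≤ ‖(p:ℤ_[p])‖ * N := by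
            apply mul_le_mul_of_nonneg_left _ (norm_nonneg _)
            rw [norm_mul]
            calc ‖z‖ * ‖bZp p z (m + 1) - bZp p z₀ (m + 1)‖
                ≤ 1 * ‖bZp p z (m + 1) - bZp p z₀ (m + 1)‖ :=
                  mul_le_mul_of_nonneg_right (PadicInt.norm_le_one z) (norm_nonneg _)
              _ = ‖bZp p z (m + 1) - bZp p z₀ (m + 1)‖ := one_mul _
              _ ≤ N := ih2
        _ < 1 * N := mul_lt_mul_of_pos_right hp1 hN0
        _ = N := one_mul N
    have hc : ‖c‖ < N := by
      obtain ⟨c₂, hc₂⟩ := bZp_sub_one_dvd (p := p) z₀ (m + 1)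
      obtain ⟨c₁, hc₁⟩ := bZp_sub_one_dvd (p := p) z₀ m
      have hw : bZp p z₀ (m + 1 + 1) - bZp p z₀ (m + 1) = (p:ℤ_[p]) * (c₂ - c₁) := by
        have h2 : bZp p z₀ (m + 1 + 1) - bZp p z₀ (m + 1)
            = (bZp p z₀ (m + 1 + 1) - 1) - (bZp p z₀ (m + 1) - 1) := by ring
        rw [h2, hc₂, hc₁]; ring
      rw [hcdef, hw, norm_mul]
      have h1 : ‖(p:ℤ_[p]) * (z₀ - z)‖ = N := by
        rw [show (p:ℤ_[p]) * (z₀ - z) = -((p:ℤ_[p]) * (z - z₀)) by ring, norm_neg]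
      rw [h1]
      calc N * ‖(p:ℤ_[p]) * (c₂ - c₁)‖ ≤ N * ‖(p:ℤ_[p])‖ := by
            apply mul_le_mul_of_nonneg_left _ hN0.le
            rw [norm_mul]
            calc ‖(p:ℤ_[p])‖ * ‖c₂ - c₁‖ ≤ ‖(p:ℤ_[p])‖ * 1 :=
                  mul_le_mul_of_nonneg_left (PadicInt.norm_le_one _) (norm_nonneg _)
              _ = ‖(p:ℤ_[p])‖ := mul_one _
        _ < N * 1 := mul_lt_mul_of_pos_left hp1 hN0
        _ = N := mul_one N
    have hbc : ‖b + c‖ < N :=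
      lt_of_le_of_lt (PadicInt.nonarchimedean _ _) (max_lt hb hc)
    constructor
    · rw [show (m + 1 + 2) = (m + 1) + 2 from rfl, hrec, norm_mul,
        norm_inv_one_sub_p_pow, mul_one]
      have h3 : a + b + c = a + (b + c) := by ring
      rw [h3, PadicInt.norm_add_eq_max_of_ne (ha ▸ hbc.ne'), ha, max_eq_left hbc.le]
    · exact le_of_eq ih1

end aux

/-- Let `p` be a prime and `z, z₀ ∈ ℤ_p` with `z ≠ z₀`. Then for every `n ≥ 1`,
`v_p(b_n(pz, p) - b_n(pz₀, p)) = v_p(z - z₀) + 1`. -/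
theorem stmt_6 (p : ℕ) [Fact p.Prime] (z z₀ : ℤ_[p]) (hz : z ≠ z₀) (n : ℕ) (hn : 1 ≤ n) :
    (bZp p z (n + 1) - bZp p z₀ (n + 1)).valuation = (z - z₀).valuation + 1 := by
  obtain ⟨m, rfl⟩ : ∃ m, n = m + 1 := ⟨n - 1, (Nat.succ_pred_eq_of_pos hn).symm⟩
  have hzz : z - z₀ ≠ 0 := sub_ne_zero.2 hz
  have hpz : (p : ℤ_[p]) * (z - z₀) ≠ 0 := by
    apply mul_ne_zero _ hzz
    exact_mod_cast (Nat.cast_ne_zero (R := ℤ_[p])).2 (Fact.out : p.Prime).ne_zero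
  have h := (bZp_diff_norm (p := p) z z₀ hz m).1
  have hD : bZp p z (m + 2) - bZp p z₀ (m + 2) ≠ 0 := by
    intro h0
    rw [h0, norm_zero] at h
    exact hpz (norm_eq_zero.1 h.symm)
  have hval : ((p : ℤ_[p]) * (z - z₀)).valuation = (z - z₀).valuation + 1 := by
    have h4 := PadicInt.valuation_p_pow_mul 1 (z - z₀) hzz
    rw [pow_one] at h4
    rw [h4]; ring
  rw [PadicInt.norm_eq_zpow_neg_valuation hD, PadicInt.norm_eq_zpow_neg_valuation hpz] at h
  have hp1 : (1:ℝ) < (p:ℝ) := by exact_mod_cast (Fact.out : p.Prime).one_lt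
  have hinj := (zpow_right_strictMono₀ hp1).injective h
  rw [neg_inj, Nat.cast_inj] at hinj
  rw [show m + 1 + 1 = m + 2 from rfl, hinj, hval]
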